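/- With P_1* = Ē N (N+1)^{L−1}/((N+1)^L − 1) and the recursion P_l* = (W_{l−2}/((1+N)W_{l−1}))(P_{l−1}*)^{N+1}, the energy identity P_1* + Σ_{l=2}^L P_l* W_{l−1}/(P_1*···P_{l−1}*)^N = Ē holds. In particular, the l-th summand equals P_1*/(N+1)^{l−1} for each 1 ≤ l ≤ L, and the geometric sum P_1* Σ_{l=1}^L (N+1)^{−(l−1)} = Ē. -/

import Mathlib

open Finset

/-- Energy expression `P_1 + ∑_{l=2}^L P_l W_{l-1}/(P_1 ⋯ P_{l-1})^N` (0-indexed,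
`W 0 = 1`). -/
noncomputable def gpConstr (L N : ℕ) (W : ℕ → ℝ) (P : Fin L → ℝ) : ℝ :=
  ∑ l, P l * W l.val / (∏ k ∈ Finset.Iio l, P k) ^ N

/-- Closed-form candidate solution (0-indexed). -/
noncomputable def gpPstar (L N : ℕ) (W : ℕ → ℝ) (E : ℝ) : ℕ → ℝ
  | 0 => E * N * ((N : ℝ) + 1) ^ (L - 1) / (((N : ℝ) + 1) ^ L - 1)
  | j + 1 => W j / (W (j + 1) * (1 + (N : ℝ))) * (gpPstar L N W E j) ^ (N + 1)

lemma prodIio {L : ℕ} (l : Fin L) (f : ℕ → ℝ) :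
    ∏ k ∈ Finset.Iio l, f k.val = ∏ k ∈ Finset.range l.val, f k := by
  rw [← Nat.Iio_eq_range, ← Fin.map_valEmbedding_Iio, Finset.prod_map]; rfl

/-- With `P₁* = Ē N (N+1)^{L-1}/((N+1)^L - 1)` and the recursion
`P_l* = (W_{l-2}/((1+N)W_{l-1}))(P_{l-1}*)^{N+1}`, each summand of the energy expression
equals `P₁*/(N+1)^{l-1}`, the geometric sum `P₁* ∑_{l=1}^L (N+1)^{-(l-1)} = Ē`, and the
energy identity `P₁* + ∑_{l=2}^L P_l* W_{l-1}/(P₁*⋯P_{l-1}*)^N = Ē` holds. -/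
theorem stmt14 (L N : ℕ) (hL : 1 ≤ L) (hN : 1 ≤ N) (W : ℕ → ℝ) (hW0 : W 0 = 1)
    (hW : ∀ l, 1 ≤ l → l ≤ L → 0 < W l) (E : ℝ) (hE : 0 < E) :
    (∀ l : Fin L,
        gpPstar L N W E l.val * W l.val /
            (∏ k ∈ Finset.Iio l, gpPstar L N W E k.val) ^ N =
          gpPstar L N W E 0 / ((N : ℝ) + 1) ^ l.val) ∧
      gpPstar L N W E 0 * ∑ l ∈ Finset.range L, (1 / ((N : ℝ) + 1)) ^ l = E ∧
      gpConstr L N W (fun l => gpPstar L N W E l.val) = E := by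
  set P := gpPstar L N W E with hP
  have hN1 : (0:ℝ) < (N:ℝ) + 1 := by positivity
  have hNpos : (0:ℝ) < (N:ℝ) := by exact_mod_cast hN
  have hpow : (1:ℝ) < ((N : ℝ) + 1) ^ L := by
    apply one_lt_pow₀ (by linarith) (by omega)
  have hW' : ∀ l, l ≤ L → 0 < W l := by
    intro l hl
    rcases Nat.eq_zero_or_pos l with h | h
    · rw [h, hW0]; norm_num
    · exact hW l h hl
  have hP0 : 0 < P 0 := by
    rw [hP]; show 0 < E * N * ((N : ℝ) + 1) ^ (L - 1) / (((N : ℝ) + 1) ^ L - 1)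
    apply div_pos (by positivity) (by linarith)
  have hPpos : ∀ l, l ≤ L → 0 < P l := by
    intro l hl
    induction l with
    | zero => exact hP0
    | succ j ih =>
      have hj := ih (by omega)
      rw [hP]; show 0 < W j / (W (j + 1) * (1 + (N : ℝ))) * (P j) ^ (N + 1)
      have := hW' j (by omega)
      have := hW' (j+1) hl
      positivity
  -- key: term formula by induction
  have hterm : ∀ l, l < L →
      P l * W l / (∏ k ∈ Finset.range l, P k) ^ N = P 0 / ((N : ℝ) + 1) ^ l := by
    intro l hl
    induction l with
    | zero => simp [hW0]
    | succ j ih =>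
      have hj : j < L := by omega
      have ihj := ih hj
      have hWj := hW' j (by omega)
      have hWj1 := hW' (j+1) (by omega)
      have hPj := hPpos j (by omega)
      have hprod : (0:ℝ) < ∏ k ∈ Finset.range j, P k := by
        apply Finset.prod_pos; intro k hk
        exact hPpos k (by simp at hk; omega)
      have hrec : P (j+1) = W j / (W (j + 1) * (1 + (N : ℝ))) * (P j) ^ (N + 1) := rfl
      rw [Finset.prod_range_succ, hrec]
      have key : W j / (W (j + 1) * (1 + (N:ℝ))) * P j ^ (N + 1) * W (j + 1) /
          ((∏ x ∈ Finset.range j, P x) * P j) ^ N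
          = (P j * W j / (∏ k ∈ Finset.range j, P k) ^ N) / ((N:ℝ)+1) := by
        rw [mul_pow]
        field_simp
        ring
      rw [key, ihj, div_div, ← pow_succ]
  have hsum2 : P 0 * ∑ l ∈ Finset.range L, (1 / ((N : ℝ) + 1)) ^ l = E := by
    have hx : (1 / ((N : ℝ) + 1)) ≠ 1 := by
      intro h
      rw [div_eq_one_iff_eq (by linarith)] at h
      linarith
    rw [geom_sum_eq hx]
    rw [hP]; show E * N * ((N : ℝ) + 1) ^ (L - 1) / (((N : ℝ) + 1) ^ L - 1) * _ = E
    have hLL : L - 1 + 1 = L := by omega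
    have hpowsplit : ((N : ℝ) + 1) ^ L = ((N : ℝ) + 1) ^ (L-1) * ((N:ℝ)+1) := by
      rw [← pow_succ, hLL]
    have h1 : (1 / ((N : ℝ) + 1)) ^ L = 1 / ((N:ℝ)+1)^L := by
      rw [div_pow, one_pow]
    have hne : ((N:ℝ)+1)^L - 1 ≠ 0 := by linarith
    have hpw : (0:ℝ) < ((N : ℝ) + 1) ^ (L-1) := by positivity
    rw [h1, hpowsplit]
    rw [hpowsplit] at hne
    generalize ((N : ℝ) + 1) ^ (L-1) = x at hne hpw ⊢
    have hne2 : (1:ℝ) - (N+1) ≠ 0 := by linarith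
    field_simp
    ring
  refine ⟨fun l => by rw [prodIio]; exact hterm l.val l.isLt, hsum2, ?_⟩
  unfold gpConstr
  have : ∀ l : Fin L, P l.val * W l.val / (∏ k ∈ Finset.Iio l, P k.val) ^ N
      = P 0 * (1 / ((N : ℝ) + 1)) ^ l.val := by
    intro l
    rw [prodIio]
    rw [hterm l.val l.isLt, div_pow, one_pow, mul_one_div]
  rw [Finset.sum_congr rfl (fun l _ => this l), ← Finset.mul_sum,
    Fin.sum_univ_eq_sum_range (fun l => (1 / ((N : ℝ) + 1)) ^ l)]
  exact hsum2
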